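/- Let φ̂, φ̂' ∈ ℝ, ε, ε' ≥ 0 with ε + ε' ≤ π, and define δ = sin(ε) + sin(ε') + 4·sin((ε+ε')/2). Then for all φ, φ' with |φ − φ̂| ≤ ε and |φ' − φ̂'| ≤ ε', the matrix J_φ(φ,φ') − (J_φ(φ̂,φ̂') − δ·I₂) is positive semidefinite, where J_φ(θ,θ') = (q(θ)−q(θ'))(q(θ)−q(θ'))ᵀ with q(θ) = (cosθ, sinθ)ᵀ. -/

import Mathlib

/-!
Testing the matrix against `x = r (cos α, sin α)` reduces the claim to the scalar inequality
`(cos b - cos b')² - (cos a - cos a')² ≤ δ` for angles with `|a - b| ≤ ε`, `|a' - b'| ≤ ε'`.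

If `ε, ε' ≤ π / 2`, expand `(cos x - cos y)² = 1 - cos (x + y) - cos (x - y) + (cos 2x + cos 2y) / 2`:
the four cosines move by at most `2 sin ((ε + ε') / 2)`, `2 sin ((ε + ε') / 2)`, `2 sin ε` and
`2 sin ε'`, which adds up to `δ`.

If `ε > π / 2`, that bound on `cos 2b - cos 2a` is lost. Instead `A = cos b - cos b'` has `|A| ≤ 2` and
differs from `B = cos a - cos a'` by at most `D = 2 (sin (ε / 2) + sin (ε' / 2))`, so `A² - B²` is
at most `4D - D²` (or `4` when `D ≥ 2`); both are at most `δ` by a polynomial inequality in the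
half-angle sines and cosines.
-/

open Real Matrix

/-- The margin `δ` of the statement. -/
noncomputable def robustMargin (ε ε' : ℝ) : ℝ :=
  sin ε + sin ε' + 4 * sin ((ε + ε') / 2)

lemma abs_sin_le_sin_of_abs_le {z m : ℝ} (hz : |z| ≤ m) (hm : m ≤ π / 2) : |sin z| ≤ sin m := by
  rw [abs_sin_eq_sin_abs_of_abs_le_pi (by linarith [pi_pos])]
  exact sin_le_sin_of_le_of_le_pi_div_two (by linarith [abs_nonneg z, pi_pos]) hm hz

lemma abs_cos_sub_cos_le {x y m : ℝ} (hxy : |x - y| ≤ 2 * m) (hm : m ≤ π / 2) :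
    |cos x - cos y| ≤ 2 * sin m := by
  have hsin : |sin ((x - y) / 2)| ≤ sin m :=
    abs_sin_le_sin_of_abs_le (by rw [abs_div, abs_two]; linarith) hm
  rw [cos_sub_cos, abs_mul, abs_mul, abs_neg, abs_two]
  nlinarith [abs_sin_le_one ((x + y) / 2), abs_nonneg (sin ((x - y) / 2)),
    abs_nonneg (sin ((x + y) / 2))]

lemma sin_le_cos_of_add_le_pi_div_two {x y : ℝ} (hx : -(π / 2) ≤ x) (hy : 0 ≤ y)
    (hxy : x + y ≤ π / 2) : sin x ≤ cos y := by
  rw [← sin_pi_div_two_sub]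
  exact sin_le_sin_of_le_of_le_pi_div_two hx (by linarith) (by linarith)

lemma sq_cos_sub_cos (x y : ℝ) :
    (cos x - cos y) ^ 2 = 1 - cos (x + y) - cos (x - y) + (cos (2 * x) + cos (2 * y)) / 2 := by
  rw [cos_add, cos_sub, cos_two_mul, cos_two_mul]
  ring

lemma sq_sub_sq_le_of_abs_sub_le {A B r D : ℝ} (hA : |A| ≤ r) (hAB : |A - B| ≤ D) (hD : D ≤ r) :
    A ^ 2 - B ^ 2 ≤ 2 * r * D - D ^ 2 := by
  have hB : |A| - D ≤ |B| := by linarith [abs_sub_abs_le_abs_sub A B]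
  have hD₀ : 0 ≤ D := (abs_nonneg _).trans hAB
  rw [← sq_abs A, ← sq_abs B]
  rcases le_total |A| D with h | h
  · nlinarith [abs_nonneg A, sq_nonneg B]
  · nlinarith [abs_nonneg B]

lemma robustMargin_comm (ε ε' : ℝ) : robustMargin ε ε' = robustMargin ε' ε := by
  rw [robustMargin, robustMargin, add_comm ε, add_comm (sin ε)]

lemma robustMargin_eq_half_angles (ε ε' : ℝ) :
    robustMargin ε ε' = 2 * sin (ε / 2) * cos (ε / 2) + 2 * sin (ε' / 2) * cos (ε' / 2)
      + 4 * (sin (ε / 2) * cos (ε' / 2) + cos (ε / 2) * sin (ε' / 2)) := by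
  rw [robustMargin, ← sin_two_mul, ← sin_two_mul, ← sin_add]
  ring_nf

lemma four_le_of_one_le_add {s c t d : ℝ} (hs : 0 ≤ s) (hc : 0 ≤ c) (ht : 0 ≤ t) (hd : 0 ≤ d)
    (hsc : s ^ 2 + c ^ 2 = 1) (htd : t ^ 2 + d ^ 2 = 1) (hsd : s ≤ d) (htc : t ≤ c)
    (h : 1 ≤ s + t) : 4 ≤ 2 * s * c + 2 * t * d + 4 * (s * d + c * t) := by
  nlinarith [mul_nonneg (sub_nonneg.2 hsd) (sub_nonneg.2 htc), mul_nonneg hs ht, mul_nonneg hc hd]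

lemma four_mul_sub_sq_le_of_add_le_one {s c t d : ℝ} (hs : 0 ≤ s) (ht : 0 ≤ t) (hd : 0 ≤ d)
    (hsc : s ^ 2 + c ^ 2 = 1) (htd : t ^ 2 + d ^ 2 = 1) (htc : t ≤ c) (hcs : c ≤ s)
    (h : s + t ≤ 1) :
    4 * (2 * (s + t)) - (2 * (s + t)) ^ 2 ≤ 2 * s * c + 2 * t * d + 4 * (s * d + c * t) := by
  have hd_lower : 1 - t ^ 2 ≤ d := by nlinarith
  have hsc_lower : 1 - s ^ 2 ≤ s * c := by nlinarith
  have hct_lower : t ^ 2 ≤ c * t := by nlinarith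
  have hd_mul : (2 * t + 4 * s) * (1 - t ^ 2) ≤ (2 * t + 4 * s) * d := by gcongr
  have hs_half : 1 ≤ 2 * s := by nlinarith
  -- the difference of the two sides, once `d`, `s * c`, `c * t` are replaced by these lower bounds
  have key : 0 ≤ 2 * (s + t - 1) ^ 2 + 2 * t * (2 * s - 1) + t ^ 2 * (6 - 2 * t - 4 * s) := by
    have : 0 ≤ 6 - 2 * t - 4 * s := by linarith
    positivity
  linarith

theorem sq_cos_sub_cos_sub_sq_le_of_le_pi_div_two {a a' b b' ε ε' : ℝ}
    (hε : ε ≤ π / 2) (hε' : ε' ≤ π / 2) (ha : |a - b| ≤ ε) (ha' : |a' - b'| ≤ ε') :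
    (cos b - cos b') ^ 2 - (cos a - cos a') ^ 2 ≤ robustMargin ε ε' := by
  obtain ⟨ha₁, ha₂⟩ := abs_le.1 ha
  obtain ⟨ha₁', ha₂'⟩ := abs_le.1 ha'
  have hσ : (ε + ε') / 2 ≤ π / 2 := by linarith
  have hsum : |cos (a + a') - cos (b + b')| ≤ 2 * sin ((ε + ε') / 2) :=
    abs_cos_sub_cos_le (abs_le.2 ⟨by linarith, by linarith⟩) hσ
  have hdiff : |cos (a - a') - cos (b - b')| ≤ 2 * sin ((ε + ε') / 2) :=
    abs_cos_sub_cos_le (abs_le.2 ⟨by linarith, by linarith⟩) hσ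
  have hdouble : |cos (2 * b) - cos (2 * a)| ≤ 2 * sin ε :=
    abs_cos_sub_cos_le (abs_le.2 ⟨by linarith, by linarith⟩) hε
  have hdouble' : |cos (2 * b') - cos (2 * a')| ≤ 2 * sin ε' :=
    abs_cos_sub_cos_le (abs_le.2 ⟨by linarith, by linarith⟩) hε'
  rw [sq_cos_sub_cos, sq_cos_sub_cos, robustMargin]
  linarith [(abs_le.1 hsum).2, (abs_le.1 hdiff).2, (abs_le.1 hdouble).2, (abs_le.1 hdouble').2]

theorem sq_cos_sub_cos_sub_sq_le_of_pi_div_two_le {a a' b b' ε ε' : ℝ} (hε' : 0 ≤ ε')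
    (hε : π / 2 ≤ ε) (hsum : ε + ε' ≤ π) (ha : |a - b| ≤ ε) (ha' : |a' - b'| ≤ ε') :
    (cos b - cos b') ^ 2 - (cos a - cos a') ^ 2 ≤ robustMargin ε ε' := by
  have hA : |cos b - cos b'| ≤ 2 := by
    linarith [abs_sub (cos b) (cos b'), abs_cos_le_one b, abs_cos_le_one b']
  have hAB : |(cos b - cos b') - (cos a - cos a')| ≤ 2 * (sin (ε / 2) + sin (ε' / 2)) := by
    have h₁ : |cos b - cos a| ≤ 2 * sin (ε / 2) :=
      abs_cos_sub_cos_le (m := ε / 2) (by rw [abs_sub_comm]; linarith) (by linarith)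
    have h₂ : |cos b' - cos a'| ≤ 2 * sin (ε' / 2) :=
      abs_cos_sub_cos_le (m := ε' / 2) (by rw [abs_sub_comm]; linarith) (by linarith)
    rw [show (cos b - cos b') - (cos a - cos a') = (cos b - cos a) - (cos b' - cos a') by ring]
    linarith [abs_sub (cos b - cos a) (cos b' - cos a')]
  rw [robustMargin_eq_half_angles]
  set s := sin (ε / 2)
  set c := cos (ε / 2)
  set t := sin (ε' / 2)
  set d := cos (ε' / 2)
  have hs : 0 ≤ s := sin_nonneg_of_nonneg_of_le_pi (by linarith [pi_pos]) (by linarith)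
  have hc : 0 ≤ c := cos_nonneg_of_mem_Icc ⟨by linarith [pi_pos], by linarith⟩
  have ht : 0 ≤ t := sin_nonneg_of_nonneg_of_le_pi (by linarith) (by linarith)
  have hd : 0 ≤ d := cos_nonneg_of_mem_Icc ⟨by linarith [pi_pos], by linarith⟩
  have hsd : s ≤ d :=
    sin_le_cos_of_add_le_pi_div_two (by linarith [pi_pos]) (by linarith) (by linarith)
  have htc : t ≤ c :=
    sin_le_cos_of_add_le_pi_div_two (by linarith [pi_pos]) (by linarith) (by linarith)
  have hcs : c ≤ s := by
    show cos (ε / 2) ≤ sin (ε / 2)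
    rw [← sin_pi_div_two_sub]
    exact sin_le_sin_of_le_of_le_pi_div_two (by linarith) (by linarith) (by linarith)
  rcases le_total (s + t) 1 with h | h
  · have := sq_sub_sq_le_of_abs_sub_le hA hAB (by linarith)
    linarith [four_mul_sub_sq_le_of_add_le_one hs ht hd (sin_sq_add_cos_sq _)
      (sin_sq_add_cos_sq _) htc hcs h]
  · nlinarith [four_le_of_one_le_add hs hc ht hd (sin_sq_add_cos_sq _) (sin_sq_add_cos_sq _)
      hsd htc h, abs_le.1 hA]

theorem sq_cos_sub_cos_sub_sq_le {a a' b b' ε ε' : ℝ} (hε : 0 ≤ ε) (hε' : 0 ≤ ε')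
    (hsum : ε + ε' ≤ π) (ha : |a - b| ≤ ε) (ha' : |a' - b'| ≤ ε') :
    (cos b - cos b') ^ 2 - (cos a - cos a') ^ 2 ≤ robustMargin ε ε' := by
  rcases le_total ε (π / 2) with h | h
  · rcases le_total ε' (π / 2) with h' | h'
    · exact sq_cos_sub_cos_sub_sq_le_of_le_pi_div_two h h' ha ha'
    · calc (cos b - cos b') ^ 2 - (cos a - cos a') ^ 2
          = (cos b' - cos b) ^ 2 - (cos a' - cos a) ^ 2 := by ring
        _ ≤ robustMargin ε' ε :=
          sq_cos_sub_cos_sub_sq_le_of_pi_div_two_le hε h' (by linarith) ha' ha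
        _ = robustMargin ε ε' := robustMargin_comm ε' ε
  · exact sq_cos_sub_cos_sub_sq_le_of_pi_div_two_le hε' h hsum ha ha'

lemma isHermitian_vecMulVec_self {n : Type*} [Fintype n] (v : n → ℝ) :
    (vecMulVec v v).IsHermitian := by
  simpa using (posSemidef_vecMulVec_self_star v).isHermitian

lemma posSemidef_vecMulVec_sub_sub_smul_one {n : Type*} [Fintype n] [DecidableEq n]
    (u v : n → ℝ) (δ : ℝ) (h : ∀ x, (v ⬝ᵥ x) ^ 2 ≤ (u ⬝ᵥ x) ^ 2 + δ * (x ⬝ᵥ x)) :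
    (vecMulVec u u - (vecMulVec v v - δ • 1)).PosSemidef := by
  rw [posSemidef_iff_dotProduct_mulVec]
  refine ⟨(isHermitian_vecMulVec_self u).sub
    ((isHermitian_vecMulVec_self v).sub (isHermitian_one.smul (IsSelfAdjoint.all δ))), fun x => ?_⟩
  have hx := h x
  simp only [star_trivial, sub_mulVec, smul_mulVec, one_mulVec, vecMulVec_mulVec, dotProduct_sub,
    dotProduct_smul, op_smul_eq_smul, smul_eq_mul, dotProduct_comm x u, dotProduct_comm x v]
  nlinarith

lemma exists_dotProduct_cos_sin_eq (x : Fin 2 → ℝ) :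
    ∃ r α : ℝ, (∀ θ, x ⬝ᵥ ![cos θ, sin θ] = r * cos (θ - α)) ∧ x ⬝ᵥ x = r ^ 2 := by
  let z : ℂ := ⟨x 0, x 1⟩
  have hre : ‖z‖ * cos z.arg = x 0 := Complex.norm_mul_cos_arg z
  have him : ‖z‖ * sin z.arg = x 1 := Complex.norm_mul_sin_arg z
  refine ⟨‖z‖, z.arg, fun θ => ?_, ?_⟩
  · simp only [dotProduct, Fin.sum_univ_two, cons_val_zero, cons_val_one, cos_sub]
    linear_combination (-cos θ) * hre - sin θ * him
  · simp only [dotProduct, Fin.sum_univ_two]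
    rw [← hre, ← him]
    linear_combination ‖z‖ ^ 2 * sin_sq_add_cos_sq z.arg

theorem stmt_9 (φh φh' ε ε' : ℝ) (hε : 0 ≤ ε) (hε' : 0 ≤ ε') (hsum : ε + ε' ≤ π)
    (φ φ' : ℝ) (hφ : |φ - φh| ≤ ε) (hφ' : |φ' - φh'| ≤ ε') :
    let q : ℝ → Fin 2 → ℝ := fun θ => ![Real.cos θ, Real.sin θ]
    let Jpair : ℝ → ℝ → Matrix (Fin 2) (Fin 2) ℝ := fun θ θ' =>
      Matrix.vecMulVec (q θ - q θ') (q θ - q θ')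
    let δ : ℝ := Real.sin ε + Real.sin ε' + 4 * Real.sin ((ε + ε') / 2)
    (Jpair φ φ' - (Jpair φh φh' - δ • (1 : Matrix (Fin 2) (Fin 2) ℝ))).PosSemidef := by
  intro q Jpair δ
  refine posSemidef_vecMulVec_sub_sub_smul_one _ _ δ fun x => ?_
  obtain ⟨r, α, hq, hx⟩ := exists_dotProduct_cos_sin_eq x
  have hdot (θ θ' : ℝ) : (q θ - q θ') ⬝ᵥ x = r * (cos (θ - α) - cos (θ' - α)) := by
    rw [sub_dotProduct, dotProduct_comm, hq, dotProduct_comm, hq]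
    ring
  have hbound : (cos (φh - α) - cos (φh' - α)) ^ 2 - (cos (φ - α) - cos (φ' - α)) ^ 2 ≤ δ :=
    sq_cos_sub_cos_sub_sq_le hε hε' hsum (by rwa [sub_sub_sub_cancel_right])
      (by rwa [sub_sub_sub_cancel_right])
  rw [hdot, hdot, hx]
  nlinarith [mul_le_mul_of_nonneg_left hbound (sq_nonneg r)]
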